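/- Let α₀ be a real number greater than 1 satisfying ∑_{k=1}^∞ k^{−α₀} = 2 (numerically α₀ ≈ 1.729). For positive integers d and n, let C(d,n) denote the number of chains from d to n in the floor quotient order, i.e. the number of finite strictly increasing sequences d = a₀ ≺₁ a₁ ≺₁ ⋯ ≺₁ a_j = n (so C(n,n) = 1 and C(d,n) = 0 when d is not a floor quotient of n). Then for all positive integers d and n, C(d,n) ≤ (n/d)^{α₀}. -/

import Mathlib

/-- `d` is a floor quotient of `n`: `d = ⌊n/k⌋` for some positive integer `k`. -/
def FloorQuotient (d n : ℕ) : Prop := ∃ k : ℕ, 0 < k ∧ d = n / k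

/-- The number of chains `d = a₀ ≺₁ a₁ ≺₁ ⋯ ≺₁ a_j = n` in the floor quotient
order, encoded as lists which are strictly increasing chains for `≺₁`,
starting at `d` and ending at `n`. -/
noncomputable def chainCount (d n : ℕ) : ℕ :=
  {l : List ℕ | l.Chain' (fun a b => FloorQuotient a b ∧ a ≠ b) ∧
    l.head? = some d ∧ l.getLast? = some n}.ncard

/-!
Removing the last element `n` of a chain from `d ≠ n` leaves a chain from some `⌊n/k⌋` with
`2 ≤ k ≤ n`, so `C(d,n) ≤ ∑_{k=2}^{n} C(d,⌊n/k⌋)`. By strong induction on `n` each term is at most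
`(⌊n/k⌋/d)^α ≤ (n/d)^α k^{-α}`, and `∑_{k ≥ 2} k^{-α} = 2 - 1 = 1` closes the induction.
-/

open Finset

namespace FloorQuotient

theorem le {a b : ℕ} (h : FloorQuotient a b) : a ≤ b := by
  obtain ⟨k, -, rfl⟩ := h
  exact Nat.div_le_self b k

theorem exists_mem_Icc_two {a b : ℕ} (ha : 0 < a) (h : FloorQuotient a b) (hne : a ≠ b) :
    ∃ k ∈ Icc 2 b, a = b / k := by
  obtain ⟨k, hk, rfl⟩ := h
  refine ⟨k, mem_Icc.2 ⟨?_, ?_⟩, rfl⟩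
  · by_contra! hk2
    obtain rfl : k = 1 := by omega
    exact hne (Nat.div_one b)
  · by_contra! hkb
    rw [Nat.div_eq_of_lt hkb] at ha
    exact ha.false

end FloorQuotient

def StrictFloorQuotient (a b : ℕ) : Prop := FloorQuotient a b ∧ a ≠ b

theorem StrictFloorQuotient.lt {a b : ℕ} (h : StrictFloorQuotient a b) : a < b :=
  h.1.le.lt_of_ne h.2

def floorQuotientChains (d n : ℕ) : Set (List ℕ) :=
  {l | l.IsChain StrictFloorQuotient ∧ l.head? = some d ∧ l.getLast? = some n}

theorem chainCount_eq_ncard (d n : ℕ) : chainCount d n = (floorQuotientChains d n).ncard := rfl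

namespace floorQuotientChains

variable {d n : ℕ} {l : List ℕ}

theorem pairwise_lt (hl : l ∈ floorQuotientChains d n) : l.Pairwise (· < ·) :=
  List.isChain_iff_pairwise.1 (hl.1.imp fun _ _ h => h.lt)

theorem le_of_mem (hl : l ∈ floorQuotientChains d n) {x : ℕ} (hx : x ∈ l) : x ≤ n :=
  hl.1.backwards_induction (· ≤ n) l (fun _ _ h hy => h.lt.le.trans hy)
    (fun _ => (List.getLast_of_mem_getLast? hl.2.2).le) x hx

theorem le (hl : l ∈ floorQuotientChains d n) : d ≤ n :=
  hl.1.induction (d ≤ ·) l (fun _ _ h hx => hx.trans h.lt.le)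
    (fun hne => ((List.head_eq_iff_head?_eq_some hne).2 hl.2.1).ge) n (List.mem_of_getLast? hl.2.2)

theorem finite (d n : ℕ) : (floorQuotientChains d n).Finite := by
  refine (((range (n + 1)).powerset.finite_toSet).image fun s => s.sort).subset ?_
  intro l hl
  refine ⟨l.toFinset, ?_, ?_⟩
  · refine mem_coe.2 (mem_powerset.2 fun x hx => ?_)
    simpa [Nat.lt_succ_iff] using le_of_mem hl (List.mem_toFinset.1 hx)
  · exact (List.toFinset_sort _ (pairwise_lt hl).nodup).2 ((pairwise_lt hl).imp le_of_lt)

theorem eq_singleton_or_exists_append (hl : l ∈ floorQuotientChains d n) :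
    (d = n ∧ l = [n]) ∨
      ∃ m l', l' ∈ floorQuotientChains d m ∧ StrictFloorQuotient m n ∧ l = l' ++ [n] := by
  obtain ⟨hchain, hhead, hlast⟩ := hl
  obtain ⟨l₁, rfl⟩ := List.getLast?_eq_some_iff.1 hlast
  rcases l₁.eq_nil_or_concat with rfl | ⟨l', m, rfl⟩
  · simp only [List.nil_append, List.head?_cons, Option.some.injEq] at hhead
    exact .inl ⟨hhead.symm, rfl⟩
  · rw [List.concat_eq_append] at hchain hhead ⊢
    obtain ⟨hchain', -, hmn⟩ := List.isChain_append.1 hchain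
    refine .inr ⟨m, l' ++ [m], ⟨hchain', ?_, by simp⟩, hmn m (by simp) n (by simp), rfl⟩
    simpa using hhead

theorem self (n : ℕ) : floorQuotientChains n n = {[n]} := by
  refine Set.eq_singleton_iff_unique_mem.2 ⟨⟨List.isChain_singleton n, rfl, rfl⟩, fun l hl => ?_⟩
  rcases eq_singleton_or_exists_append hl with ⟨-, rfl⟩ | ⟨m, l', hl', hmn, -⟩
  · rfl
  · exact absurd (le hl') hmn.lt.not_ge

theorem subset_biUnion (hd : 0 < d) (hdn : d ≠ n) :
    floorQuotientChains d n ⊆ ⋃ k ∈ Icc 2 n, (· ++ [n]) '' floorQuotientChains d (n / k) := by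
  intro l hl
  rcases eq_singleton_or_exists_append hl with ⟨h, -⟩ | ⟨m, l', hl', hmn, rfl⟩
  · exact absurd h hdn
  obtain ⟨k, hk, rfl⟩ := hmn.1.exists_mem_Icc_two (hd.trans_le (le hl')) hmn.2
  exact Set.mem_biUnion hk ⟨l', hl', rfl⟩

end floorQuotientChains

theorem chainCount_self (n : ℕ) : chainCount n n = 1 := by
  rw [chainCount_eq_ncard, floorQuotientChains.self, Set.ncard_singleton]

theorem chainCount_le_sum {d n : ℕ} (hd : 0 < d) (hdn : d ≠ n) :
    chainCount d n ≤ ∑ k ∈ Icc 2 n, chainCount d (n / k) := by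
  simp only [chainCount_eq_ncard]
  calc (floorQuotientChains d n).ncard
      ≤ (⋃ k ∈ Icc 2 n, (· ++ [n]) '' floorQuotientChains d (n / k)).ncard :=
        Set.ncard_le_ncard (floorQuotientChains.subset_biUnion hd hdn)
          (Set.Finite.biUnion (finite_toSet _) fun k _ => (floorQuotientChains.finite d _).image _)
    _ ≤ ∑ k ∈ Icc 2 n, ((· ++ [n]) '' floorQuotientChains d (n / k)).ncard :=
        set_ncard_biUnion_le _ _
    _ ≤ ∑ k ∈ Icc 2 n, (floorQuotientChains d (n / k)).ncard :=
        sum_le_sum fun k _ => Set.ncard_image_le (floorQuotientChains.finite d _)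

theorem natCast_div_div_rpow_le {α : ℝ} (hα : 0 ≤ α) (n d k : ℕ) :
    ((n / k : ℕ) / d : ℝ) ^ α ≤ ((n : ℝ) / d) ^ α * (k : ℝ) ^ (-α) := by
  have hdiv : ((n / k : ℕ) / d : ℝ) ≤ (n : ℝ) / d * (k : ℝ)⁻¹ := by
    calc ((n / k : ℕ) / d : ℝ) ≤ (n : ℝ) / k / d := by gcongr; exact Nat.cast_div_le
      _ = (n : ℝ) / d * (k : ℝ)⁻¹ := by ring
  calc ((n / k : ℕ) / d : ℝ) ^ α ≤ ((n : ℝ) / d * (k : ℝ)⁻¹) ^ α :=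
        Real.rpow_le_rpow (by positivity) hdiv hα
    _ = ((n : ℝ) / d) ^ α * (k : ℝ) ^ (-α) := by
        rw [Real.mul_rpow (by positivity) (by positivity), Real.inv_rpow (by positivity),
          Real.rpow_neg (by positivity)]

theorem chainCount_le_rpow {α : ℝ} (hα : 0 ≤ α)
    (hsum : ∀ N : ℕ, ∑ k ∈ Icc 2 N, (k : ℝ) ^ (-α) ≤ 1) {d : ℕ} (hd : 0 < d) (n : ℕ) :
    (chainCount d n : ℝ) ≤ ((n : ℝ) / d) ^ α := by
  induction n using Nat.strong_induction_on with
  | _ n ih =>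
  rcases eq_or_ne d n with rfl | hdn
  · have hd' : (d : ℝ) ≠ 0 := by positivity
    simp [chainCount_self, div_self hd']
  calc (chainCount d n : ℝ) ≤ ∑ k ∈ Icc 2 n, (chainCount d (n / k) : ℝ) := by
        exact_mod_cast chainCount_le_sum hd hdn
    _ ≤ ∑ k ∈ Icc 2 n, ((n : ℝ) / d) ^ α * (k : ℝ) ^ (-α) := by
        refine sum_le_sum fun k hk => ?_
        have hk := mem_Icc.1 hk
        exact (ih _ (Nat.div_lt_self (by omega) hk.1)).trans (natCast_div_div_rpow_le hα n d k)
    _ = ((n : ℝ) / d) ^ α * ∑ k ∈ Icc 2 n, (k : ℝ) ^ (-α) := (mul_sum _ _ _).symm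
    _ ≤ ((n : ℝ) / d) ^ α := mul_le_of_le_one_right (by positivity) (hsum n)

theorem sum_Icc_two_rpow_neg_le_one {α : ℝ} (hα : α ≠ 0)
    (hsum : ∑' k : ℕ+, (k : ℝ) ^ (-α) = 2) (N : ℕ) :
    ∑ k ∈ Icc 2 N, (k : ℝ) ^ (-α) ≤ 1 := by
  rw [tsum_pnat_eq_tsum_of_eq_zero (f := fun k : ℕ => (k : ℝ) ^ (-α))
    (by simp [Real.zero_rpow (neg_ne_zero.2 hα)])] at hsum
  have hsummable : Summable fun k : ℕ => (k : ℝ) ^ (-α) := by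
    by_contra h
    simp [tsum_eq_zero_of_not_summable h] at hsum
  have hpartial := hsummable.sum_le_tsum (insert 1 (Icc 2 N)) fun k _ => by positivity
  rw [sum_insert (by simp), hsum, Nat.cast_one, Real.one_rpow] at hpartial
  linarith

theorem chain_count_upper_bound_general (α₀ : ℝ) (hα : 1 < α₀)
    (hsum : ∑' k : ℕ+, (k : ℝ) ^ (-α₀) = 2)
    (d n : ℕ) (hd : 0 < d) :
    (chainCount d n : ℝ) ≤ ((n : ℝ) / d) ^ α₀ :=
  chainCount_le_rpow (zero_le_one.trans hα.le)
    (sum_Icc_two_rpow_neg_le_one (zero_lt_one.trans hα).ne' hsum) hd n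

theorem chain_count_upper_bound (α₀ : ℝ) (hα : 1 < α₀)
    (hsum : ∑' k : ℕ+, (k : ℝ) ^ (-α₀) = 2)
    (d n : ℕ) (hd : 0 < d) (hn : 0 < n) :
    (chainCount d n : ℝ) ≤ ((n : ℝ) / d) ^ α₀ :=
  chain_count_upper_bound_general α₀ hα hsum d n hd
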